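/- Let μ be a probability measure on ℕ = {1,2,...} with generating function g(r) = Σ_k μ({k}) r^k, and suppose g(r) = exp(−βΦ(r)) = (exp(−β₀Φ(r)))^{β/β₀} where exp(−β₀Φ(·)) is itself the generating function of a probability measure μ₀ on ℕ with μ₀({1}) > 0, and Φ(r) → ∞ as r ↓ 0. Then β/β₀ ∈ ℕ. (I.e. the rate of decay of a QSD of an explosive DSBP must be an integer multiple of β₀.) -/

import Mathlib

/-!
If `m` is the least index with `μ m ≠ 0`, then `log g(r) = m log r + log (μ m) + o(1)` as `r ↓ 0`,
and likewise `log g₀(r) = log r + log (μ₀ 1) + o(1)`. Since `log g = (β / β₀) log g₀`, the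
function `(β / β₀ - m) log r` has a finite limit at `0⁺`, which forces `β / β₀ = m`.
-/

open Set Filter

open Topology Real

section PowerSeries

variable {a : ℕ → ℝ}

lemma norm_mul_pow_le_norm {r : ℝ} (hr : r ∈ Icc (-1) 1) (k : ℕ) : ‖a k * r ^ k‖ ≤ ‖a k‖ := by
  rw [norm_mul, norm_pow]
  exact mul_le_of_le_one_right (norm_nonneg _) (pow_le_one₀ (norm_nonneg r) (abs_le.2 hr))

lemma summable_mul_pow (ha : Summable (‖a ·‖)) {r : ℝ} (hr : r ∈ Icc (-1) 1) :
    Summable (fun k ↦ a k * r ^ k) :=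
  ha.of_norm_bounded (norm_mul_pow_le_norm hr)

lemma continuousOn_tsum_mul_pow (ha : Summable (‖a ·‖)) :
    ContinuousOn (fun r ↦ ∑' k, a k * r ^ k) (Icc (-1) 1) :=
  continuousOn_tsum (fun k ↦ by fun_prop) ha fun k _ hr ↦ norm_mul_pow_le_norm hr k

lemma tsum_mul_pow_eq_pow_mul_tsum_add {m : ℕ} (ha : Summable (‖a ·‖)) (hlow : ∀ k < m, a k = 0)
    {r : ℝ} (hr : r ∈ Icc (-1) 1) :
    ∑' k, a k * r ^ k = r ^ m * ∑' k, a (k + m) * r ^ k := by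
  rw [← (summable_mul_pow ha hr).sum_add_tsum_nat_add m, ← tsum_mul_left,
    Finset.sum_eq_zero fun k hk ↦ by rw [hlow k (Finset.mem_range.1 hk), zero_mul], zero_add]
  congr 1 with k
  ring

lemma tendsto_log_tsum_mul_pow_sub_mul_log {m : ℕ} (ha : Summable (‖a ·‖))
    (hlow : ∀ k < m, a k = 0) (hm : a m ≠ 0) :
    Tendsto (fun r ↦ log (∑' k, a k * r ^ k) - m * log r) (𝓝[>] 0) (𝓝 (log (a m))) := by
  set f : ℝ → ℝ := fun r ↦ ∑' k, a (k + m) * r ^ k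
  have hf0 : f 0 = a m := by
    simp only [f]
    rw [tsum_eq_single 0 fun k hk ↦ by simp [hk]]
    simp
  have hIcc : Icc (-1 : ℝ) 1 ∈ 𝓝[>] 0 :=
    mem_of_superset (Icc_mem_nhdsGT one_pos) (Icc_subset_Icc_left (by norm_num))
  have hf : Tendsto f (𝓝[>] 0) (𝓝 (a m)) := by
    have hcont := continuousOn_tsum_mul_pow ((summable_nat_add_iff m).2 ha) 0 (by norm_num)
    rw [← hf0]
    exact (hcont.mono_of_mem_nhdsWithin hIcc).tendsto
  refine ((continuousAt_log hm).tendsto.comp hf).congr' ?_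
  filter_upwards [hIcc, self_mem_nhdsWithin, hf.eventually_ne hm] with r hr hr0 hfr
  rw [Function.comp_apply, tsum_mul_pow_eq_pow_mul_tsum_add ha hlow hr,
    log_mul (pow_ne_zero m (ne_of_gt hr0)) hfr, log_pow]
  ring

end PowerSeries

lemma eq_zero_of_tendsto_mul_log {c L : ℝ} (h : Tendsto (fun r ↦ c * log r) (𝓝[>] 0) (𝓝 L)) :
    c = 0 := by
  rcases lt_trichotomy c 0 with hc | hc | hc
  · exact absurd h (not_tendsto_nhds_of_tendsto_atTop
      ((tendsto_const_mul_atTop_of_neg hc).2 tendsto_log_nhdsGT_zero) L)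
  · exact hc
  · exact absurd h (not_tendsto_nhds_of_tendsto_atBot
      ((tendsto_const_mul_atBot_of_pos hc).2 tendsto_log_nhdsGT_zero) L)

lemma summable_norm_of_nonneg_of_tsum_ne_zero {a : ℕ → ℝ} (hnn : ∀ k, 0 ≤ a k)
    (h : ∑' k, a k ≠ 0) : Summable (‖a ·‖) := by
  simp only [Real.norm_of_nonneg (hnn _)]
  by_contra hs
  exact h (tsum_eq_zero_of_not_summable hs)

theorem rate_of_decay_integer_multiple_general (β β₀ : ℝ) (hβ₀ : 0 < β₀)
    (Φ : ℝ → ℝ)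
    (μ μ₀ : ℕ → ℝ)
    (hμnn : ∀ k, 0 ≤ μ k) (hμ0 : μ 0 = 0) (hμsum : ∑' k, μ k = 1)
    (hμ₀nn : ∀ k, 0 ≤ μ₀ k) (hμ₀0 : μ₀ 0 = 0) (hμ₀sum : ∑' k, μ₀ k = 1)
    (hμ₀1 : 0 < μ₀ 1)
    (hg₀ : ∀ r ∈ Set.Ioc (0:ℝ) 1, ∑' k, μ₀ k * r ^ k = Real.exp (-(β₀ * Φ r)))
    (hg : ∀ r ∈ Set.Ioc (0:ℝ) 1, ∑' k, μ k * r ^ k = Real.exp (-(β * Φ r))) :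
    ∃ n : ℕ, 0 < n ∧ β = n * β₀ := by
  have hex : ∃ k, μ k ≠ 0 := by
    by_contra! h
    simp [h] at hμsum
  classical
  set m := Nat.find hex
  have hm : μ m ≠ 0 := Nat.find_spec hex
  have hF := tendsto_log_tsum_mul_pow_sub_mul_log
    (summable_norm_of_nonneg_of_tsum_ne_zero hμnn (by simp [hμsum]))
    (fun k hk ↦ not_not.1 (Nat.find_min hex hk)) hm
  have hF₀ := tendsto_log_tsum_mul_pow_sub_mul_log (m := 1)
    (summable_norm_of_nonneg_of_tsum_ne_zero hμ₀nn (by simp [hμ₀sum]))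
    (fun k hk ↦ by rwa [Nat.lt_one_iff.1 hk]) hμ₀1.ne'
  have hθ : β / β₀ - m = 0 := by
    refine eq_zero_of_tendsto_mul_log ((hF.sub (hF₀.const_mul (β / β₀))).congr' ?_)
    filter_upwards [Ioo_mem_nhdsGT one_pos] with r hr
    rw [hg r ⟨hr.1, hr.2.le⟩, hg₀ r ⟨hr.1, hr.2.le⟩, log_exp, log_exp]
    field_simp
    ring
  refine ⟨m, Nat.pos_of_ne_zero fun h ↦ hm (h ▸ hμ0), ?_⟩
  rw [← sub_eq_zero.1 hθ, div_mul_cancel₀ β hβ₀.ne']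

theorem rate_of_decay_integer_multiple (β β₀ : ℝ) (hβ : 0 < β) (hβ₀ : 0 < β₀)
    (Φ : ℝ → ℝ) (hΦ1 : Φ 1 = 0) (hΦnn : ∀ r ∈ Set.Ioc (0:ℝ) 1, 0 ≤ Φ r)
    (hΦ0 : Tendsto Φ (nhdsWithin 0 (Set.Ioi 0)) atTop)
    (μ μ₀ : ℕ → ℝ)
    (hμnn : ∀ k, 0 ≤ μ k) (hμ0 : μ 0 = 0) (hμsum : ∑' k, μ k = 1)
    (hμ₀nn : ∀ k, 0 ≤ μ₀ k) (hμ₀0 : μ₀ 0 = 0) (hμ₀sum : ∑' k, μ₀ k = 1)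
    (hμ₀1 : 0 < μ₀ 1)
    (hg₀ : ∀ r ∈ Set.Ioc (0:ℝ) 1, ∑' k, μ₀ k * r ^ k = Real.exp (-(β₀ * Φ r)))
    (hg : ∀ r ∈ Set.Ioc (0:ℝ) 1, ∑' k, μ k * r ^ k = Real.exp (-(β * Φ r))) :
    ∃ n : ℕ, 0 < n ∧ β = n * β₀ :=
  rate_of_decay_integer_multiple_general β β₀ hβ₀ Φ μ μ₀ hμnn hμ0 hμsum hμ₀nn hμ₀0 hμ₀sum hμ₀1 hg₀
    hg
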